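/- Fix an integer c ≥ 2, a real ε with 0 < ε < 1, and a positive real constant κ. For each n, let S_n be the set of pairs (a,b) with a < b, a+b = c^n, gcd(a,b)=1, and let N(c,n) be the number of pairs in S_n satisfying c^n < R(c)^(ε/(1+ε))·R(ab)^(1/(1+ε)). Suppose that for all n, κ · R(c)^(1-ε) · c^(2n) < (∏_{(a,b)∈S_n} R(c·a·b))^(2/φ(c^n)). Then N(c,n)/(φ(c^n)/2) → 1 as n → ∞. -/

import Mathlib

open Filter

/-- The radical of a natural number: the product of its distinct prime factors. -/
def rad (m : ℕ) : ℕ := ∏ p ∈ m.primeFactors, p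

/-- The set of pairs `(a, b)` with `0 < a < b`, `a + b = c ^ n`, `gcd a b = 1`. -/
def S (c n : ℕ) : Finset (ℕ × ℕ) :=
  (Finset.range (c ^ n) ×ˢ Finset.range (c ^ n)).filter
    (fun p => 0 < p.1 ∧ p.1 < p.2 ∧ p.1 + p.2 = c ^ n ∧ Nat.gcd p.1 p.2 = 1)

/-- The number of pairs in `S c n` satisfying the strong abc inequality for `ε`. -/
noncomputable def Ncount (c n : ℕ) (ε : ℝ) : ℕ :=
  ((S c n).filter (fun p => (c : ℝ) ^ (n : ℝ) <
      (rad c : ℝ) ^ (ε / (1 + ε)) * (rad (p.1 * p.2) : ℝ) ^ (1 / (1 + ε)))).card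

/-!
Every pair of `S c n` has `rad (c a b) ≤ rad c · c ^ (2n)`, while a pair violating the strong abc
inequality has `rad (c a b) ≤ rad c ^ (1 - ε) · c ^ ((1 + ε) n)`, smaller by the factor
`rad c ^ ε · c ^ ((1 - ε) n)`. After taking logarithms, the hypothesis says that the mean of
`log rad (c a b)` over `S c n` falls short of the universal bound by at most the constant
`ε log rad c - log κ`, so the proportion of violating pairs is `O(1 / n)`. The normalisation
`#(S c n) = φ(c ^ n) / 2` holds because `a ↦ c ^ n - a` swaps the residues prime to `c ^ n` below
and above `c ^ n / 2`, and the former are the first coordinates of `S c n`.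
-/

open Real Finset UniqueFactorizationMonoid

lemma rad_eq_radical (m : ℕ) : rad m = radical m := Nat.radical_eq_prod_primeFactors.symm

lemma rad_pos (m : ℕ) : 0 < rad m := rad_eq_radical m ▸ Nat.radical_pos m

lemma rad_le_self {m : ℕ} (hm : m ≠ 0) : rad m ≤ m :=
  rad_eq_radical m ▸ Nat.radical_le_self_iff.2 hm

lemma rad_mul_le (a b : ℕ) : rad (a * b) ≤ rad a * rad b := by
  simp only [rad_eq_radical]
  exact Nat.le_of_dvd (Nat.mul_pos (Nat.radical_pos a) (Nat.radical_pos b)) radical_mul_dvd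

lemma log_rad_mul_le (c a b : ℕ) :
    log (rad (c * a * b)) ≤ log (rad c) + log (rad (a * b)) := by
  have hle : (rad (c * (a * b)) : ℝ) ≤ rad c * rad (a * b) := by exact_mod_cast rad_mul_le _ _
  rw [← log_mul (by positivity [rad_pos c]) (by positivity [rad_pos (a * b)]), mul_assoc]
  exact log_le_log (by exact_mod_cast rad_pos _) hle

lemma log_rad_mul_le_of_mem_S {c n : ℕ} {p : ℕ × ℕ} (hp : p ∈ S c n) :
    log (rad (p.1 * p.2)) ≤ 2 * n * log c := by
  simp only [S, mem_filter, mem_product, mem_range] at hp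
  obtain ⟨⟨ha, hb⟩, ha0, hab, -⟩ := hp
  have hle : rad (p.1 * p.2) ≤ c ^ n * c ^ n :=
    (rad_le_self (Nat.mul_pos ha0 (ha0.trans hab)).ne').trans (Nat.mul_le_mul ha.le hb.le)
  calc log (rad (p.1 * p.2)) ≤ log ((c : ℝ) ^ n * (c : ℝ) ^ n) :=
        log_le_log (by exact_mod_cast rad_pos _) (by exact_mod_cast hle)
    _ = 2 * n * log c := by rw [← pow_add, log_pow]; push_cast; ring

lemma log_rad_le_of_not_lt {c n a b : ℕ} {ε : ℝ} (hε : 0 < 1 + ε)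
    (h : ¬ (c : ℝ) ^ (n : ℝ) < (rad c : ℝ) ^ (ε / (1 + ε)) * (rad (a * b) : ℝ) ^ (1 / (1 + ε))) :
    ε * log (rad c) + log (rad (a * b)) ≤ (1 + ε) * n * log c := by
  have hc : (0 : ℝ) < rad c := by exact_mod_cast rad_pos c
  have hab : (0 : ℝ) < rad (a * b) := by exact_mod_cast rad_pos _
  have hlog := log_le_log (by positivity) (not_lt.1 h)
  rw [log_mul (by positivity) (by positivity), log_rpow hc, log_rpow hab, rpow_natCast,
    log_pow] at hlog
  have := mul_le_mul_of_nonneg_left hlog hε.le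
  field_simp at this
  linarith

lemma card_sub_card_filter_mul_lt {ι : Type*} {s : Finset ι} {f : ι → ℝ} {P : ι → Prop}
    [DecidablePred P] {U D L : ℝ} (hU : ∀ i ∈ s, f i ≤ U) (hP : ∀ i ∈ s, ¬ P i → f i + D ≤ U)
    (hL : #s * L < ∑ i ∈ s, f i) :
    ((#s : ℝ) - #(s.filter P)) * D < #s * (U - L) := by
  have hgood : ∑ i ∈ s.filter P, f i ≤ #(s.filter P) * U := by
    simpa using sum_le_card_nsmul _ f U fun i hi => hU i (mem_filter.1 hi).1
  have hbad : ∑ i ∈ s.filter (¬ P ·), f i ≤ #(s.filter (¬ P ·)) * (U - D) := by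
    simpa using sum_le_card_nsmul _ f (U - D) fun i hi =>
      (le_sub_iff_add_le.2 (hP i (mem_filter.1 hi).1 (mem_filter.1 hi).2))
  have hcard : (#s : ℝ) = #(s.filter P) + #(s.filter (¬ P ·)) := by
    exact_mod_cast (card_filter_add_card_filter_not P).symm
  rw [← sum_filter_add_sum_filter_not s P] at hL
  rw [hcard] at hL ⊢
  linarith

lemma card_mul_log_lt_sum_log {ι : Type*} {s : Finset ι} (hs : s.Nonempty) {f : ι → ℝ}
    (hf : ∀ i ∈ s, 0 < f i) {A : ℝ} (hA : 0 < A) (h : A < (∏ i ∈ s, f i) ^ ((#s : ℝ)⁻¹)) :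
    #s * log A < ∑ i ∈ s, log (f i) := by
  have hcard : (0 : ℝ) < #s := by exact_mod_cast hs.card_pos
  have hlog := log_lt_log hA h
  rw [log_rpow (prod_pos hf), log_prod fun i hi => (hf i hi).ne'] at hlog
  rwa [← lt_inv_mul_iff₀ hcard]

lemma totient_eq_two_mul_card_filter_two_mul_lt {m : ℕ} (hm : 2 < m) :
    m.totient = 2 * #{a ∈ range m | m.Coprime a ∧ 2 * a < m} := by
  have hhalf :
      #{a ∈ range m | m.Coprime a ∧ ¬ 2 * a < m} = #{a ∈ range m | m.Coprime a ∧ 2 * a < m} := by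
    refine card_nbij' (m - ·) (m - ·) ?_ ?_ ?_ ?_
    · intro a ha
      simp only [mem_coe, mem_filter, mem_range] at ha ⊢
      obtain ⟨ham, hcop, h2a⟩ := ha
      have hne : 2 * a ≠ m := by
        rintro rfl
        simp [Nat.Coprime] at hcop
        omega
      exact ⟨by omega, (Nat.coprime_self_sub_right ham.le).2 hcop, by omega⟩
    · intro a ha
      simp only [mem_coe, mem_filter, mem_range] at ha ⊢
      obtain ⟨ham, hcop, h2a⟩ := ha
      have ha0 : a ≠ 0 := by rintro rfl; simp at hcop; omega
      exact ⟨by omega, (Nat.coprime_self_sub_right ham.le).2 hcop, by omega⟩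
    all_goals
      intro a ha
      simp only [mem_coe, mem_filter, mem_range] at ha
      dsimp only
      omega
  rw [Nat.totient, ← card_filter_add_card_filter_not (fun a => 2 * a < m), filter_filter,
    filter_filter, hhalf, two_mul]

lemma card_S_eq_card_filter_two_mul_lt {c n : ℕ} (h : c ^ n ≠ 1) :
    #(S c n) = #{a ∈ range (c ^ n) | (c ^ n).Coprime a ∧ 2 * a < c ^ n} := by
  refine card_nbij' Prod.fst (fun a => (a, c ^ n - a)) ?_ ?_ ?_ ?_
  · intro p hp
    simp only [S, mem_coe, mem_filter, mem_product, mem_range] at hp ⊢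
    obtain ⟨⟨ha, -⟩, -, hab, hsum, hcop⟩ := hp
    exact ⟨ha, hsum ▸ Nat.coprime_self_add_left.2 (Nat.Coprime.symm hcop), by omega⟩
  · intro a ha
    simp only [S, mem_coe, mem_filter, mem_product, mem_range] at ha ⊢
    obtain ⟨ham, hcop, h2a⟩ := ha
    have ha0 : a ≠ 0 := by rintro rfl; exact h (Nat.coprime_zero_right _ |>.1 hcop)
    rw [← Nat.add_sub_cancel' ham.le, Nat.coprime_self_add_left] at hcop
    exact ⟨⟨ham, by omega⟩, by omega, by omega, by omega, hcop.symm⟩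
  · intro p hp
    simp only [S, mem_coe, mem_filter, mem_product, mem_range] at hp
    exact Prod.ext rfl (by dsimp only; omega)
  · exact fun a _ => rfl

lemma totient_eq_two_mul_card_S {c n : ℕ} (h : 2 < c ^ n) : (c ^ n).totient = 2 * #(S c n) := by
  rw [card_S_eq_card_filter_two_mul_lt (by omega), totient_eq_two_mul_card_filter_two_mul_lt h]

lemma card_S_pos {c n : ℕ} (h : 2 < c ^ n) : 0 < #(S c n) := by
  have := Nat.totient_pos.2 (by omega : 0 < c ^ n)
  rw [totient_eq_two_mul_card_S h] at this
  omega

lemma card_sub_Ncount_mul_lt {c n : ℕ} {ε κ : ℝ} (hcn : 2 < c ^ n) (hε : 0 < 1 + ε) (hκ : 0 < κ)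
    (hGM : κ * (rad c : ℝ) ^ (1 - ε) * (c : ℝ) ^ (2 * (n : ℝ)) <
        (∏ p ∈ S c n, (rad (c * p.1 * p.2) : ℝ)) ^ (2 / (Nat.totient (c ^ n) : ℝ))) :
    ((#(S c n) : ℝ) - Ncount c n ε) * ((1 - ε) * n * log c + ε * log (rad c)) <
      #(S c n) * (ε * log (rad c) - log κ) := by
  have hc : (0 : ℝ) < c := by
    have : c ≠ 0 := by rintro rfl; cases n <;> simp at hcn
    positivity
  have hrad : (0 : ℝ) < rad c := by exact_mod_cast rad_pos c
  rw [totient_eq_two_mul_card_S hcn, Nat.cast_mul, Nat.cast_two,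
    div_mul_cancel_left₀ two_ne_zero] at hGM
  have hmean := card_mul_log_lt_sum_log (card_pos.1 (card_S_pos hcn))
    (fun p _ => by exact_mod_cast rad_pos _) (by positivity) hGM
  rw [log_mul (by positivity) (by positivity), log_mul hκ.ne' (by positivity), log_rpow hrad,
    log_rpow hc] at hmean
  unfold Ncount
  refine lt_of_lt_of_eq (card_sub_card_filter_mul_lt (U := log (rad c) + 2 * n * log c) ?_ ?_ hmean)
    (by ring)
  · intro p hp
    linarith [log_rad_mul_le c p.1 p.2, log_rad_mul_le_of_mem_S hp]
  · intro p _ hbad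
    linarith [log_rad_mul_le c p.1 p.2, log_rad_le_of_not_lt hε hbad]

lemma tendsto_div_of_sub_mul_le {N T : ℕ → ℝ} {K : ℝ}
    (h : ∀ᶠ n in atTop, 0 < T n ∧ N n ≤ T n ∧ (T n - N n) * n ≤ K * T n) :
    Tendsto (fun n => N n / T n) atTop (nhds 1) := by
  refine tendsto_of_tendsto_of_tendsto_of_le_of_le' (g := fun n : ℕ => 1 - K / n) ?_
    tendsto_const_nhds ?_ ?_
  · simpa using tendsto_const_nhds.sub
      (tendsto_const_nhds.div_atTop (tendsto_natCast_atTop_atTop (R := ℝ)))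
  · filter_upwards [h, eventually_gt_atTop 0] with n ⟨hT, _, hK⟩ hn
    have hn' : (0 : ℝ) < n := by exact_mod_cast hn
    have : (T n - N n) / T n ≤ K / n := by rw [div_le_div_iff₀ hT hn']; linarith
    calc 1 - K / n ≤ 1 - (T n - N n) / T n := by linarith
      _ = N n / T n := by field_simp; ring
  · filter_upwards [h] with n ⟨hT, hNT, _⟩
    exact (div_le_one hT).2 hNT

theorem stmt_6 (c : ℕ) (hc : 2 ≤ c) (ε : ℝ) (hε0 : 0 < ε) (hε1 : ε < 1)
    (κ : ℝ) (hκ : 0 < κ)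
    (hGM : ∀ n : ℕ, 0 < n →
      κ * (rad c : ℝ) ^ (1 - ε) * (c : ℝ) ^ (2 * (n : ℝ)) <
        (∏ p ∈ S c n, (rad (c * p.1 * p.2) : ℝ)) ^ (2 / (Nat.totient (c ^ n) : ℝ))) :
    Tendsto (fun n : ℕ => (Ncount c n ε : ℝ) / ((Nat.totient (c ^ n) : ℝ) / 2))
      atTop (nhds 1) := by
  have hlogc : 0 < (1 - ε) * log c := mul_pos (by linarith) (log_pos (by exact_mod_cast hc))
  have hlograd : 0 ≤ ε * log (rad c) :=
    mul_nonneg hε0.le (log_nonneg (Nat.one_le_cast.2 (rad_pos c)))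
  have hcn : ∀ n ≥ 2, 2 < c ^ n := fun n hn =>
    calc 2 < 2 ^ 2 := by norm_num
      _ ≤ c ^ n := (Nat.pow_le_pow_left hc 2).trans (Nat.pow_le_pow_right (by omega) hn)
  refine (tendsto_div_of_sub_mul_le (N := fun n => Ncount c n ε) (T := fun n => #(S c n))
    (K := (ε * log (rad c) - log κ) / ((1 - ε) * log c)) ?_).congr' ?_
  · filter_upwards [eventually_ge_atTop 2] with n hn2
    have hn := hcn n hn2
    have hT : (0 : ℝ) < #(S c n) := by exact_mod_cast card_S_pos hn
    have hNT : (Ncount c n ε : ℝ) ≤ #(S c n) := by exact_mod_cast card_filter_le _ _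
    have hdef := card_sub_Ncount_mul_lt hn (by linarith) hκ (hGM n (by omega))
    refine ⟨hT, hNT, ?_⟩
    rw [div_mul_eq_mul_div, le_div_iff₀ hlogc]
    linarith [mul_nonneg (sub_nonneg.2 hNT) hlograd]
  · filter_upwards [eventually_ge_atTop 2] with n hn
    rw [totient_eq_two_mul_card_S (hcn n hn)]
    push_cast
    ring
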